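/- arXiv:1702.07915 — 3 statements merged into one kernel-verified Lean document; each statement's English description precedes it below -/
import Mathlib

section
/- Let g(σ_J²) = N ln((σ_a²+σ_J²)/(σ_b²+σ_J²)) with the substitutions σ̂_{J,0}² = (t/N − σ_a²)_+ and σ̂_{J,1}² = (t/N − σ_b²)_+ where t = ‖r‖² and 0 < σ_a² < σ_b². Then the resulting statistic Λ(t) = N ln((σ_a²+σ̂_{J,0}²)/(σ_b²+σ̂_{J,1}²)) − t/(σ_b²+σ̂_{J,1}²) + t/(σ_a²+σ̂_{J,0}²) is given piecewise by: Λ(t) = N ln(σ_a²/σ_b²) − t/σ_b² + t/σ_a² for t/N < σ_a²; Λ(t) = N ln(t/(Nσ_b²)) − t/σ_b² + N for σ_a² ≤ t/N < σ_b²; and Λ(t) = 0 for t/N ≥ σ_b². Moreover Λ is nondecreasing in t on [0, Nσ_b²]. -/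
open Real

lemma log_lower (x : ℝ) (hx : 0 < x) : 1 - 1/x ≤ Real.log x := by
  have h := Real.log_le_sub_one_of_pos (x := 1/x) (by positivity)
  rw [Real.log_div one_ne_zero (ne_of_gt hx), Real.log_one] at h
  linarith

lemma keyB (N : ℕ) (hN : 0 < N) (sb : ℝ) (hsb : 0 < sb)
    (u v : ℝ) (hu : 0 < u) (huv : u ≤ v) (hv : v ≤ N * sb) :
    (N : ℝ) * Real.log (u / (N * sb)) - u / sb ≤
      (N : ℝ) * Real.log (v / (N * sb)) - v / sb := by
  have hNpos : (0:ℝ) < N := Nat.cast_pos.mpr hN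
  have hvpos : (0:ℝ) < v := lt_of_lt_of_le hu huv
  have hc : (0:ℝ) < (N:ℝ) * sb := by positivity
  have hlog : Real.log (v / (N * sb)) - Real.log (u / (N * sb)) = Real.log (v / u) := by
    rw [Real.log_div (ne_of_gt hvpos) (ne_of_gt hc),
        Real.log_div (ne_of_gt hu) (ne_of_gt hc),
        Real.log_div (ne_of_gt hvpos) (ne_of_gt hu)]
    ring
  have hlb : 1 - u / v ≤ Real.log (v / u) := by
    have := log_lower (v / u) (by positivity)
    have : 1 - 1 / (v / u) ≤ Real.log (v / u) := this
    rwa [one_div_div] at this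
  -- need: v/sb - u/sb ≤ N * log (v/u)
  have hkey : v / sb - u / sb ≤ (N : ℝ) * Real.log (v / u) := by
    have h1 : (N : ℝ) * (1 - u / v) ≤ (N : ℝ) * Real.log (v / u) :=
      mul_le_mul_of_nonneg_left hlb (le_of_lt hNpos)
    have h2 : v / sb - u / sb ≤ (N : ℝ) * (1 - u / v) := by
      have hm : (v - u) * v ≤ (v - u) * ((N:ℝ) * sb) :=
        mul_le_mul_of_nonneg_left hv (by linarith)
      have e : (N:ℝ) * (1 - u / v) = ((N:ℝ) * (v - u)) / v := by
        field_simp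
      rw [e, div_sub_div_same, div_le_div_iff₀ hsb hvpos]
      nlinarith [hm]
    linarith
  have := hlog
  nlinarith [hkey, hlog]

/-- Closed piecewise form (Eq. (35)) of the IS/IGMM-GLRT statistic under the
NLOS assumption, with `σ̂_{J,0}² = (t/N − σ_a²)₊`, `σ̂_{J,1}² = (t/N − σ_b²)₊`
and `t = ‖r‖²`, together with its monotonicity in `t` on `[0, Nσ_b²]`. -/
theorem nlos_glrt_piecewise
    (N : ℕ) (hN : 0 < N) (sa sb : ℝ) (hsa : 0 < sa) (hab : sa < sb)
    (s0 s1 : ℝ → ℝ)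
    (hs0 : ∀ t, s0 t = max 0 (t / N - sa))
    (hs1 : ∀ t, s1 t = max 0 (t / N - sb))
    (Λ : ℝ → ℝ)
    (hΛ : ∀ t, Λ t = (N : ℝ) * Real.log ((sa + s0 t) / (sb + s1 t))
        - t / (sb + s1 t) + t / (sa + s0 t)) :
    (∀ t, 0 ≤ t → t / N < sa →
        Λ t = (N : ℝ) * Real.log (sa / sb) - t / sb + t / sa) ∧
    (∀ t, sa ≤ t / N → t / N < sb →
        Λ t = (N : ℝ) * Real.log (t / (N * sb)) - t / sb + N) ∧
    (∀ t, sb ≤ t / N → Λ t = 0) ∧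
    (∀ t₁ t₂, 0 ≤ t₁ → t₁ ≤ t₂ → t₂ ≤ N * sb → Λ t₁ ≤ Λ t₂) := by
  have hNpos : (0:ℝ) < N := Nat.cast_pos.mpr hN
  have hsb : (0:ℝ) < sb := lt_trans hsa hab
  have eq1 : ∀ t, t / N < sa → Λ t = (N : ℝ) * Real.log (sa / sb) - t / sb + t / sa := by
    intro t ht
    have h0 : s0 t = 0 := by rw [hs0 t]; exact max_eq_left (by linarith)
    have h1 : s1 t = 0 := by
      rw [hs1 t]; exact max_eq_left (by linarith)
    rw [hΛ t, h0, h1, add_zero, add_zero]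
  have eq2 : ∀ t, sa ≤ t / N → t / N ≤ sb →
      Λ t = (N : ℝ) * Real.log (t / (N * sb)) - t / sb + N := by
    intro t hta htb
    have htpos : 0 < t := by
      have h := mul_pos (lt_of_lt_of_le hsa hta) hNpos
      rwa [div_mul_cancel₀ _ (ne_of_gt hNpos)] at h
    have h0 : s0 t = t / N - sa := by rw [hs0 t]; exact max_eq_right (by linarith)
    have h1 : s1 t = 0 := by rw [hs1 t]; exact max_eq_left (by linarith)
    rw [hΛ t, h0, h1, add_zero]
    have e1 : sa + (t / N - sa) = t / N := by ring
    rw [e1, div_div]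
    have e2 : t / (t / N) = N := by
      field_simp
    rw [e2]
  have eq3 : ∀ t, sb ≤ t / N → Λ t = 0 := by
    intro t ht
    have htpos : 0 < t := by
      have h := mul_pos (lt_of_lt_of_le hsb ht) hNpos
      rwa [div_mul_cancel₀ _ (ne_of_gt hNpos)] at h
    have h0 : s0 t = t / N - sa := by rw [hs0 t]; exact max_eq_right (by linarith)
    have h1 : s1 t = t / N - sb := by rw [hs1 t]; exact max_eq_right (by linarith)
    rw [hΛ t, h0, h1]
    have e1 : sa + (t / N - sa) = t / N := by ring
    have e2 : sb + (t / N - sb) = t / N := by ring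
    rw [e1, e2, div_self (ne_of_gt (by positivity : (0:ℝ) < t / N)), Real.log_one]
    ring
  refine ⟨fun t _ ht => eq1 t ht, fun t hta htb => eq2 t hta (le_of_lt htb), eq3, ?_⟩
  intro t₁ t₂ h1 h12 h2
  have ht1b : t₁ / N ≤ sb := by
    rw [div_le_iff₀ hNpos]; linarith [h12, h2]
  have ht2b : t₂ / N ≤ sb := by rw [div_le_iff₀ hNpos]; linarith
  -- linear part comparison in region A
  have hAmono : ∀ u v, 0 ≤ u → u ≤ v → (- (u / sb) + u / sa) ≤ (- (v / sb) + v / sa) := by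
    intro u v hu huv
    have h1 : 1 / sb ≤ 1 / sa := by
      apply one_div_le_one_div_of_le hsa (le_of_lt hab)
    have : u * (1/sa - 1/sb) ≤ v * (1/sa - 1/sb) :=
      mul_le_mul_of_nonneg_right huv (by linarith)
    have eu : - (u / sb) + u / sa = u * (1/sa - 1/sb) := by ring
    have ev : - (v / sb) + v / sa = v * (1/sa - 1/sb) := by ring
    linarith [eu ▸ this]
  by_cases hc2 : t₂ / N < sa
  · -- both in A
    have hc1 : t₁ / N < sa := lt_of_le_of_lt (by gcongr) hc2
    rw [eq1 t₁ hc1, eq1 t₂ hc2]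
    have := hAmono t₁ t₂ h1 h12
    linarith
  · push_neg at hc2
    -- t₂ in region B
    have hB2 : Λ t₂ = (N : ℝ) * Real.log (t₂ / (N * sb)) - t₂ / sb + N :=
      eq2 t₂ hc2 ht2b
    by_cases hc1 : t₁ / N < sa
    · -- t₁ in region A, t₂ in B
      have hA1 := eq1 t₁ hc1
      have ht1sa : t₁ ≤ N * sa := by
        rw [div_lt_iff₀ hNpos] at hc1; linarith
      have step1 : Λ t₁ ≤ (N : ℝ) * Real.log (sa / sb) - (N * sa) / sb + (N * sa) / sa := by
        have := hAmono t₁ (N * sa) h1 ht1sa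
        rw [hA1]; linarith
      have e1 : ((N : ℝ) * sa) / sa = N := by field_simp
      have e2 : Real.log (sa / sb) = Real.log ((N * sa) / (N * sb)) := by
        rw [mul_div_mul_left _ _ (ne_of_gt hNpos)]
      have step2 := keyB N hN sb hsb (N * sa) t₂ (mul_pos hNpos hsa)
        (by rw [le_div_iff₀ hNpos] at hc2; linarith) h2
      rw [hB2]
      rw [e1, e2] at step1
      linarith
    · push_neg at hc1
      have ht1pos : 0 < t₁ := by
        have h := mul_pos (lt_of_lt_of_le hsa hc1) hNpos
        rwa [div_mul_cancel₀ _ (ne_of_gt hNpos)] at h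
      rw [eq2 t₁ hc1 ht1b, hB2]
      have := keyB N hN sb hsb t₁ t₂ ht1pos h12 h2
      linarith
end

section
/- (Lemma 3, IGMM part) Under the ideal-sensors assumption (ρ_1 = 1_K, ρ_0 = 0_K, Σ_{x|H_i} = 0), the IGMM statistic ȳ^†(Σ̄_0^{-1} − Σ̄_1^{-1})ȳ + 2 ȳ^†(Σ̄_1^{-1} m_1 − Σ̄_0^{-1} m_0), where Σ̄_i = σ_{e,i}² I_{2N} with σ_{e,1}² = Σ_k ν_k + σ_w², σ_{e,0}² = σ_w², m_1 = Ā·1_K (augmented LOS sum), m_0 = 0, equals (2K/σ_{e,1}²)·(‖y‖² ν̄/σ_w² + 2Re(μ̄^† y)), i.e., a positive multiple of the IS statistic Λ_IS. -/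
open Real Complex Finset Matrix

/-- (Lemma 3, IGMM part) Under the ideal-sensors assumption
(`ρ₁ = 1_K`, `ρ₀ = 0_K`, `Σ_{x|H_i} = 0`), the IGMM statistic
`ȳ†(Σ̄₀⁻¹ − Σ̄₁⁻¹)ȳ + 2 ȳ† Σ̄₁⁻¹ m₁` with `Σ̄_i = σ_{e,i}² I_{2N}`,
`σ_{e,1}² = Σ_k ν_k + σ_w²`, `σ_{e,0}² = σ_w²`, `m₁ = Ā 1_K`, `m₀ = 0`, equals
`(2K/σ_{e,1}²)((ν̄/σ_w²)‖y‖² + 2Re(μ̄† y))`, a positive multiple of `Λ_IS`. -/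
theorem igmm_is_assumption_equals_is
    (N K : ℕ) (hN : 0 < N) (hK : 0 < K)
    (A : Matrix (Fin N) (Fin K) ℂ)                 -- LOS matrix Ã
    (ν : Fin K → ℝ) (hν : ∀ k, 0 < ν k) (sw2 : ℝ) (hsw2 : 0 < sw2)
    (se1 se0 : ℝ) (hse1 : se1 = (∑ k, ν k) + sw2) (hse0 : se0 = sw2)
    (v : Fin N → ℂ) (hv : v = A.mulVec 1)          -- Ã 1_K = Σ_k μ_k = K μ̄
    (μbar : Fin N → ℂ) (hμbar : ∀ j, μbar j = (K : ℂ)⁻¹ * v j)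
    (νbar : ℝ) (hνbar : νbar = (∑ k, ν k) / K)
    (ybar : (Fin N → ℂ) → (Fin N ⊕ Fin N → ℂ))
    (hybar : ∀ y, ybar y = Sum.elim y (fun j => starRingEnd ℂ (y j)))
    (m1 : Fin N ⊕ Fin N → ℂ)
    (hm1 : m1 = Sum.elim v (fun j => starRingEnd ℂ (v j))) -- Ā 1_K (augmented)
    (Λ : (Fin N → ℂ) → ℝ)
    (hΛ : ∀ y, Λ y =
        ((∑ i, starRingEnd ℂ (ybar y i) * ybar y i) * ((1 / se0 : ℝ) - (1 / se1 : ℝ))).re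
        + (2 * (1 / se1 : ℝ) * (∑ i, starRingEnd ℂ (ybar y i) * m1 i)).re)
    (ΛIS : (Fin N → ℂ) → ℝ)
    (hΛIS : ∀ y, ΛIS y = 2 * (∑ j, starRingEnd ℂ (μbar j) * y j).re
        + (νbar / sw2) * ∑ j, Complex.normSq (y j)) :
    (∀ y : Fin N → ℂ, Λ y = (2 * K / se1) *
        ((νbar / sw2) * (∑ j, Complex.normSq (y j))
          + 2 * (∑ j, starRingEnd ℂ (μbar j) * y j).re)) ∧
    (∀ y : Fin N → ℂ, Λ y = (2 * K / se1) * ΛIS y) ∧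
    0 < 2 * K / se1 := by

  have hKpos : (0:ℝ) < K := Nat.cast_pos.mpr hK
  have hKne : (K:ℝ) ≠ 0 := ne_of_gt hKpos
  have hs : 0 < ∑ k, ν k :=
    Finset.sum_pos (fun k _ => hν k) ⟨⟨0, hK⟩, Finset.mem_univ _⟩
  have hse1pos : 0 < se1 := by rw [hse1]; linarith
  have hse1ne : se1 ≠ 0 := ne_of_gt hse1pos
  have hswne : sw2 ≠ 0 := ne_of_gt hsw2
  have hpos : 0 < 2 * K / se1 := by positivity
  have main : ∀ y : Fin N → ℂ, Λ y = (2 * K / se1) *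
      ((νbar / sw2) * (∑ j, Complex.normSq (y j))
        + 2 * (∑ j, starRingEnd ℂ (μbar j) * y j).re) := by
    intro y
    set z : ℂ := ∑ j, starRingEnd ℂ (y j) * v j with hz
    set S : ℝ := ∑ j, Complex.normSq (y j) with hS
    have hA : (∑ i, starRingEnd ℂ (ybar y i) * ybar y i) = ((2 * S : ℝ) : ℂ) := by
      rw [hybar, Fintype.sum_sum_type]
      have e1 : ∀ x, starRingEnd ℂ (y x) * y x = ((Complex.normSq (y x) : ℝ) : ℂ) :=
        fun x => by rw [mul_comm, Complex.mul_conj]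
      simp only [Sum.elim_inl, Sum.elim_inr, RingHom.id_apply,
        RingHomCompTriple.comp_apply, e1, Complex.mul_conj]
      rw [hS]
      push_cast
      ring
    have hB : (∑ i, starRingEnd ℂ (ybar y i) * m1 i) = z + starRingEnd ℂ z := by
      rw [hybar, hm1, Fintype.sum_sum_type, hz, map_sum]
      simp only [Sum.elim_inl, Sum.elim_inr, _root_.map_mul, Complex.conj_conj]
    have hμ : (∑ j, starRingEnd ℂ (μbar j) * y j).re = (K:ℝ)⁻¹ * z.re := by
      have h1 : (∑ j, starRingEnd ℂ (μbar j) * y j) = (K:ℂ)⁻¹ * starRingEnd ℂ z := by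
        rw [hz, map_sum, Finset.mul_sum]
        refine Finset.sum_congr rfl fun j _ => ?_
        rw [hμbar]
        simp only [_root_.map_mul, Complex.conj_conj, map_inv₀, Complex.conj_natCast]
        ring
      rw [h1]
      have : ((K:ℂ)⁻¹ : ℂ) = ((K:ℝ)⁻¹ : ℝ) := by push_cast; ring
      rw [this, Complex.re_ofReal_mul, Complex.conj_re]
    rw [hΛ, hA, hB, hμ, Complex.add_conj]
    have h2 : ((2 * S : ℝ) : ℂ) * (((1 / se0 : ℝ) : ℂ) - ((1 / se1 : ℝ) : ℂ))
        = (((2 * S) * (1 / se0 - 1 / se1) : ℝ) : ℂ) := by push_cast; ring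
    have h3 : (2 : ℂ) * ((1 / se1 : ℝ) : ℂ) * ((2 * z.re : ℝ) : ℂ)
        = ((2 * (1 / se1) * (2 * z.re) : ℝ) : ℂ) := by push_cast; ring
    rw [h2, h3, Complex.ofReal_re, Complex.ofReal_re, hse0, hνbar, hse1]
    field_simp
    ring
  refine ⟨main, fun y => ?_, hpos⟩
  rw [main y, hΛIS y]
  ring
end

section
/- In the conditionally i.i.d. case (P_{i,k} = P_i for all k) and with the approximation Σ̄_{ȳ|H_i} ≈ σ_{e,i}² I_{2N}, the approximate IGMM statistic ‖y‖²(1/σ_{e,0}² − 1/σ_{e,1}²)·2 + 2 ȳ^†(m_1/σ_{e,1}² − m_0/σ_{e,0}²) with m_i = P_i Ā 1_K and σ_{e,i}² = P_i Σ_k ν_k + σ_w² equals (2K(P_D−P_F)σ_w²/(σ_{e,0}² σ_{e,1}²))·((ν̄/σ_w²)‖y‖² + 2Re(μ̄^† y)), a positive multiple of Λ_IS when P_D > P_F. -/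
open Real Complex Finset Matrix

/-- (Lemma 2) In the conditionally i.i.d. case, under the weak-LOS
approximation `Σ̄_{ȳ|H_i} ≈ σ_{e,i}² I_{2N}`, the approximate IGMM statistic
`2‖y‖²(1/σ_{e,0}² − 1/σ_{e,1}²) + 2 ȳ†(m₁/σ_{e,1}² − m₀/σ_{e,0}²)` with
`m_i = P_i Ā 1_K` and `σ_{e,i}² = P_i Σ_k ν_k + σ_w²` equals
`(2K(P_D−P_F)σ_w²/(σ_{e,0}²σ_{e,1}²))((ν̄/σ_w²)‖y‖² + 2Re(μ̄† y))`,
a positive multiple of `Λ_IS` when `P_D > P_F`. -/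
theorem igmm_weak_los_equals_is
    (N K : ℕ) (hN : 0 < N) (hK : 0 < K)
    (A : Matrix (Fin N) (Fin K) ℂ)
    (ν : Fin K → ℝ) (hν : ∀ k, 0 < ν k) (sw2 : ℝ) (hsw2 : 0 < sw2)
    (PD PF : ℝ) (hPF : 0 ≤ PF) (hPD : PD ≤ 1) (hord : PF < PD)
    (se1 se0 : ℝ)
    (hse1 : se1 = PD * (∑ k, ν k) + sw2) (hse0 : se0 = PF * (∑ k, ν k) + sw2)
    (v : Fin N → ℂ) (hv : v = A.mulVec 1)              -- Ã 1_K = K μ̄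
    (μbar : Fin N → ℂ) (hμbar : ∀ j, μbar j = (K : ℂ)⁻¹ * v j)
    (νbar : ℝ) (hνbar : νbar = (∑ k, ν k) / K)
    (vbar : Fin N ⊕ Fin N → ℂ)
    (hvbar : vbar = Sum.elim v (fun j => starRingEnd ℂ (v j)))   -- Ā 1_K
    (ybar : (Fin N → ℂ) → (Fin N ⊕ Fin N → ℂ))
    (hybar : ∀ y, ybar y = Sum.elim y (fun j => starRingEnd ℂ (y j)))
    (Λ : (Fin N → ℂ) → ℝ)
    (hΛ : ∀ y, Λ y = 2 * (∑ j, Complex.normSq (y j)) * (1 / se0 - 1 / se1)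
        + (2 * (∑ i, starRingEnd ℂ (ybar y i) *
            (((PD / se1 : ℝ) : ℂ) * vbar i - ((PF / se0 : ℝ) : ℂ) * vbar i))).re)
    (ΛIS : (Fin N → ℂ) → ℝ)
    (hΛIS : ∀ y, ΛIS y = 2 * (∑ j, starRingEnd ℂ (μbar j) * y j).re
        + (νbar / sw2) * ∑ j, Complex.normSq (y j)) :
    (∀ y : Fin N → ℂ, Λ y = (2 * K * (PD - PF) * sw2 / (se0 * se1)) *
        ((νbar / sw2) * (∑ j, Complex.normSq (y j))
          + 2 * (∑ j, starRingEnd ℂ (μbar j) * y j).re)) ∧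
    (∀ y : Fin N → ℂ, Λ y = (2 * K * (PD - PF) * sw2 / (se0 * se1)) * ΛIS y) ∧
    0 < 2 * K * (PD - PF) * sw2 / (se0 * se1) := by

  have hsum : 0 < ∑ k, ν k := Finset.sum_pos (fun k _ => hν k) ⟨⟨0, hK⟩, Finset.mem_univ _⟩
  have hPDp : 0 < PD := lt_of_le_of_lt hPF hord
  have hse1p : 0 < se1 := by rw [hse1]; nlinarith
  have hse0p : 0 < se0 := by rw [hse0]; nlinarith
  have hKp : (0:ℝ) < K := Nat.cast_pos.mpr hK
  have key : ∀ y : Fin N → ℂ, Λ y = (2 * K * (PD - PF) * sw2 / (se0 * se1)) *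
      ((νbar / sw2) * (∑ j, Complex.normSq (y j))
        + 2 * (∑ j, starRingEnd ℂ (μbar j) * y j).re) := by
    intro y
    set ny := ∑ j, Complex.normSq (y j) with hny
    set S := ∑ j, (starRingEnd ℂ (y j) * v j) with hS
    have h1 : Λ y = 2 * ny * (1/se0 - 1/se1) + 4 * (PD/se1 - PF/se0) * S.re := by
      rw [hΛ y]
      congr 1
      have hsum2 : (∑ i, starRingEnd ℂ (ybar y i) *
          (((PD / se1 : ℝ):ℂ) * vbar i - ((PF / se0 : ℝ):ℂ) * vbar i))
          = ((PD/se1 - PF/se0 : ℝ):ℂ) * (S + starRingEnd ℂ S) := by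
        rw [hybar, hvbar, Fintype.sum_sum_type]
        simp only [Sum.elim_inl, Sum.elim_inr, hS, map_sum, _root_.map_mul,
          RingHomCompTriple.comp_apply, RingHom.id_apply, Complex.ofReal_sub,
          Complex.ofReal_div, mul_add, Finset.mul_sum, ← Finset.sum_add_distrib]
        apply Finset.sum_congr rfl
        intro j _
        ring
      rw [hsum2]
      have hc : ((2:ℂ) * (((PD/se1 - PF/se0 : ℝ):ℂ) * (S + starRingEnd ℂ S)))
          = (((2*(PD/se1 - PF/se0) : ℝ):ℂ) * (S + starRingEnd ℂ S)) := by
        push_cast; ring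
      rw [hc]
      rw [show (((2*(PD/se1 - PF/se0) : ℝ):ℂ) * (S + starRingEnd ℂ S)).re
          = (2*(PD/se1 - PF/se0)) * (S + starRingEnd ℂ S).re from by
        simp [Complex.mul_re]]
      rw [Complex.add_re, Complex.conj_re]
      ring
    have h2 : (∑ j, starRingEnd ℂ (μbar j) * y j).re = (K:ℝ)⁻¹ * S.re := by
      have : (∑ j, starRingEnd ℂ (μbar j) * y j) = ((K:ℂ))⁻¹ * starRingEnd ℂ S := by
        rw [hS, map_sum, Finset.mul_sum]
        apply Finset.sum_congr rfl
        intro j _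
        rw [hμbar j]
        simp [_root_.map_mul, map_inv₀]
        ring
      rw [this]
      have hcast : ((K:ℂ))⁻¹ = (((K:ℝ)⁻¹ : ℝ) : ℂ) := by push_cast; ring
      rw [hcast]
      simp [Complex.mul_re, Complex.conj_re, Complex.conj_im]
    rw [h1, h2, hse1, hse0, hνbar]
    have h0 : (0:ℝ) < PD * (∑ k, ν k) + sw2 := by nlinarith
    have h0' : (0:ℝ) < PF * (∑ k, ν k) + sw2 := by nlinarith
    field_simp
    ring
  refine ⟨key, fun y => by rw [key y, hΛIS y]; ring, ?_⟩
  apply div_pos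
  · nlinarith [mul_pos (mul_pos (mul_pos (two_pos (α := ℝ)) hKp) (sub_pos.mpr hord)) hsw2]
  · positivity
end
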